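/- Genus 1 derivation-algebra relations: for the operators 𝓛_0 = L_0 − z₁∂₁, 𝓛_2 = L_2 − ψ₁∂₁ and ∂₁ acting on smooth functions, the commutation relations [𝓛_0, ∂₁] = ∂₁, [𝓛_0, 𝓛_2] = 2𝓛_2, and [∂₁, 𝓛_2] = −ψ₁₁∂₁ hold, where ψ₁ = −∂₁ ln φ, ψ₁₁ = −∂₁² ln φ and 𝓛_0 ψ₁ = z₁∂₁ψ₁ + ψ₁, 𝓛_2 ψ₁ = (1/2)ψ₁₁₁ − (1/3)λ₄z₁ are used. -/

import Mathlib

/-- Partial derivative in the `i`-th coordinate (`x 0 = z₁`, `x 1 = λ₄`, `x 2 = λ₆`). -/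
noncomputable def pd3 (i : Fin 3) (f : (Fin 3 → ℝ) → ℝ) : (Fin 3 → ℝ) → ℝ :=
  fun x => fderiv ℝ f x (Pi.single i 1)

/-- `L₀ = 4λ₄ ∂_{λ₄} + 6λ₆ ∂_{λ₆}`. -/
noncomputable def L0op (f : (Fin 3 → ℝ) → ℝ) : (Fin 3 → ℝ) → ℝ :=
  fun x => 4 * x 1 * pd3 1 f x + 6 * x 2 * pd3 2 f x

/-- `L₂ = 6λ₆ ∂_{λ₄} − (4/3)λ₄² ∂_{λ₆}`. -/
noncomputable def L2op (f : (Fin 3 → ℝ) → ℝ) : (Fin 3 → ℝ) → ℝ :=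
  fun x => 6 * x 2 * pd3 1 f x - (4/3) * (x 1) ^ 2 * pd3 2 f x

/-- `ψ₁ = −∂₁ ln φ` for a fixed nonvanishing `φ`. -/
noncomputable def psi1 (φ : (Fin 3 → ℝ) → ℝ) : (Fin 3 → ℝ) → ℝ :=
  fun x => -(pd3 0 φ x / φ x)

/-- `𝓛₀ = L₀ − z₁∂₁`. -/
noncomputable def calL0 (f : (Fin 3 → ℝ) → ℝ) : (Fin 3 → ℝ) → ℝ :=
  fun x => L0op f x - x 0 * pd3 0 f x

/-- `𝓛₂ = L₂ − ψ₁∂₁`. -/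
noncomputable def calL2 (φ f : (Fin 3 → ℝ) → ℝ) : (Fin 3 → ℝ) → ℝ :=
  fun x => L2op f x - psi1 φ x * pd3 0 f x

lemma contDiff_pd3 {f : (Fin 3 → ℝ) → ℝ} (hf : ContDiff ℝ (⊤ : ℕ∞) f) (i : Fin 3) :
    ContDiff ℝ (⊤ : ℕ∞) (pd3 i f) :=
  (hf.fderiv_right (m := (⊤ : ℕ∞)) le_rfl).clm_apply contDiff_const

lemma pd3_add {f g : (Fin 3 → ℝ) → ℝ} {x} (hf : DifferentiableAt ℝ f x)
    (hg : DifferentiableAt ℝ g x) (i : Fin 3) :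
    pd3 i (fun y => f y + g y) x = pd3 i f x + pd3 i g x := by
  simp [pd3, fderiv_fun_add hf hg]

lemma pd3_sub {f g : (Fin 3 → ℝ) → ℝ} {x} (hf : DifferentiableAt ℝ f x)
    (hg : DifferentiableAt ℝ g x) (i : Fin 3) :
    pd3 i (fun y => f y - g y) x = pd3 i f x - pd3 i g x := by
  simp [pd3, fderiv_fun_sub hf hg]

lemma pd3_mul {f g : (Fin 3 → ℝ) → ℝ} {x} (hf : DifferentiableAt ℝ f x)
    (hg : DifferentiableAt ℝ g x) (i : Fin 3) :
    pd3 i (fun y => f y * g y) x = pd3 i f x * g x + f x * pd3 i g x := by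
  simp [pd3, fderiv_fun_mul hf hg]; ring

lemma pd3_const_mul {g : (Fin 3 → ℝ) → ℝ} {x} (hg : DifferentiableAt ℝ g x) (c : ℝ) (i : Fin 3) :
    pd3 i (fun y => c * g y) x = c * pd3 i g x := by
  simp [pd3, fderiv_const_mul hg]

lemma contDiff_proj (j : Fin 3) : ContDiff ℝ (⊤ : ℕ∞) (fun y : Fin 3 → ℝ => y j) :=
  (ContinuousLinearMap.proj j : (Fin 3 → ℝ) →L[ℝ] ℝ).contDiff

lemma pd3_coord (i j : Fin 3) (x : Fin 3 → ℝ) :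
    pd3 i (fun y => y j) x = if j = i then 1 else 0 := by
  have h : (fun y : Fin 3 → ℝ => y j) = (ContinuousLinearMap.proj j : (Fin 3 → ℝ) →L[ℝ] ℝ) := rfl
  rw [pd3, h, ContinuousLinearMap.fderiv]
  simp [Pi.single_apply]

lemma pd3_coordmul {g : (Fin 3 → ℝ) → ℝ} (hg : ContDiff ℝ (⊤ : ℕ∞) g) (c : ℝ) (i j : Fin 3)
    (x : Fin 3 → ℝ) :
    pd3 i (fun y => c * y j * g y) x
      = c * (if j = i then 1 else 0) * g x + c * x j * pd3 i g x := by
  have h1 : (fun y : Fin 3 → ℝ => c * y j * g y) = fun y => (fun z : Fin 3 → ℝ => c * z j) y * g y := rfl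
  have hc : ContDiff ℝ (⊤ : ℕ∞) (fun y : Fin 3 → ℝ => c * y j) := contDiff_const.mul (contDiff_proj j)
  rw [h1, pd3_mul (hc.differentiable (by simp) x) (hg.differentiable (by simp) x),
    pd3_const_mul ((contDiff_proj j).differentiable (by simp) x), pd3_coord]

lemma pd3_sqmul {g : (Fin 3 → ℝ) → ℝ} (hg : ContDiff ℝ (⊤ : ℕ∞) g) (c : ℝ) (i j : Fin 3)
    (x : Fin 3 → ℝ) :
    pd3 i (fun y => c * y j ^ 2 * g y) x
      = 2 * c * x j * (if j = i then 1 else 0) * g x + c * x j ^ 2 * pd3 i g x := by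
  have h1 : (fun y : Fin 3 → ℝ => c * y j ^ 2 * g y)
      = fun y => (fun z : Fin 3 → ℝ => c * (z j * z j)) y * g y := by
    funext y; ring
  have hc : ContDiff ℝ (⊤ : ℕ∞) (fun y : Fin 3 → ℝ => c * (y j * y j)) :=
    contDiff_const.mul ((contDiff_proj j).mul (contDiff_proj j))
  rw [h1, pd3_mul (hc.differentiable (by simp) x) (hg.differentiable (by simp) x),
    pd3_const_mul (((contDiff_proj j).mul (contDiff_proj j)).differentiable (by simp) x),
    pd3_mul ((contDiff_proj j).differentiable (by simp) x) ((contDiff_proj j).differentiable (by simp) x),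
    pd3_coord]
  ring

lemma pd3_symm {f : (Fin 3 → ℝ) → ℝ} (hf : ContDiff ℝ (⊤ : ℕ∞) f) (i j : Fin 3) (x : Fin 3 → ℝ) :
    pd3 i (pd3 j f) x = pd3 j (pd3 i f) x := by
  have hd : ∀ y, HasFDerivAt f (fderiv ℝ f y) y := fun y =>
    (hf.differentiable (by simp) y).hasFDerivAt
  have hd2 : DifferentiableAt ℝ (fderiv ℝ f) x :=
    ((hf.fderiv_right (m := (⊤ : ℕ∞)) le_rfl).differentiable (by simp) x)
  have hsymm := second_derivative_symmetric hd hd2.hasFDerivAt (Pi.single j 1) (Pi.single i 1)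
  have e : ∀ a b : Fin 3, pd3 a (pd3 b f) x
      = (fderiv ℝ (fderiv ℝ f) x (Pi.single a 1)) (Pi.single b 1) := by
    intro a b
    unfold pd3
    rw [fderiv_clm_apply hd2 (differentiableAt_const _)]
    simp
  rw [e, e]
  exact hsymm.symm

lemma contDiff_psi1 {φ : (Fin 3 → ℝ) → ℝ} (hφ : ContDiff ℝ (⊤ : ℕ∞) φ) (hne : ∀ x, φ x ≠ 0) :
    ContDiff ℝ (⊤ : ℕ∞) (psi1 φ) :=
  (((contDiff_pd3 hφ 0).div hφ hne)).neg

lemma contDiff_calL0 {f : (Fin 3 → ℝ) → ℝ} (hf : ContDiff ℝ (⊤ : ℕ∞) f) :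
    ContDiff ℝ (⊤ : ℕ∞) (calL0 f) := by
  unfold calL0 L0op
  exact (((contDiff_const.mul (contDiff_proj 1)).mul (contDiff_pd3 hf 1)).add
    ((contDiff_const.mul (contDiff_proj 2)).mul (contDiff_pd3 hf 2))).sub
    ((contDiff_proj 0).mul (contDiff_pd3 hf 0))

lemma contDiff_calL2 {φ f : (Fin 3 → ℝ) → ℝ} (hφ : ContDiff ℝ (⊤ : ℕ∞) φ) (hne : ∀ x, φ x ≠ 0)
    (hf : ContDiff ℝ (⊤ : ℕ∞) f) : ContDiff ℝ (⊤ : ℕ∞) (calL2 φ f) := by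
  unfold calL2 L2op
  exact (((contDiff_const.mul (contDiff_proj 2)).mul (contDiff_pd3 hf 1)).sub
    ((contDiff_const.mul ((contDiff_proj 1).pow 2)).mul (contDiff_pd3 hf 2))).sub
    ((contDiff_psi1 hφ hne).mul (contDiff_pd3 hf 0))

lemma pd3_calL0 {f : (Fin 3 → ℝ) → ℝ} (hf : ContDiff ℝ (⊤ : ℕ∞) f) (i : Fin 3) (x : Fin 3 → ℝ) :
    pd3 i (calL0 f) x
      = 4 * (if (1 : Fin 3) = i then 1 else 0) * pd3 1 f x + 4 * x 1 * pd3 i (pd3 1 f) x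
        + (6 * (if (2 : Fin 3) = i then 1 else 0) * pd3 2 f x + 6 * x 2 * pd3 i (pd3 2 f) x)
        - ((if (0 : Fin 3) = i then 1 else 0) * pd3 0 f x + x 0 * pd3 i (pd3 0 f) x) := by
  have h : calL0 f = fun y =>
      (fun z => (fun w => 4 * w 1 * pd3 1 f w) z + (fun w => 6 * w 2 * pd3 2 f w) z) y
        - (fun z => 1 * z 0 * pd3 0 f z) y := by
    funext y; simp [calL0, L0op]
  have h1 : ContDiff ℝ (⊤ : ℕ∞) (fun w : Fin 3 → ℝ => 4 * w 1 * pd3 1 f w) :=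
    (contDiff_const.mul (contDiff_proj 1)).mul (contDiff_pd3 hf 1)
  have h2 : ContDiff ℝ (⊤ : ℕ∞) (fun w : Fin 3 → ℝ => 6 * w 2 * pd3 2 f w) :=
    (contDiff_const.mul (contDiff_proj 2)).mul (contDiff_pd3 hf 2)
  rw [h, pd3_sub ((h1.add h2).differentiable (by simp) x)
      (((contDiff_const.mul (contDiff_proj 0)).mul (contDiff_pd3 hf 0)).differentiable (by simp) x)]
  rw [pd3_add (h1.differentiable (by simp) x) (h2.differentiable (by simp) x),
    pd3_coordmul (contDiff_pd3 hf 1) 4 i 1, pd3_coordmul (contDiff_pd3 hf 2) 6 i 2,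
    pd3_coordmul (contDiff_pd3 hf 0) 1 i 0]
  ring

lemma pd3_calL2 {φ f : (Fin 3 → ℝ) → ℝ} (hφ : ContDiff ℝ (⊤ : ℕ∞) φ) (hne : ∀ x, φ x ≠ 0)
    (hf : ContDiff ℝ (⊤ : ℕ∞) f) (i : Fin 3) (x : Fin 3 → ℝ) :
    pd3 i (calL2 φ f) x
      = 6 * (if (2 : Fin 3) = i then 1 else 0) * pd3 1 f x + 6 * x 2 * pd3 i (pd3 1 f) x
        - (2 * (4/3) * x 1 * (if (1 : Fin 3) = i then 1 else 0) * pd3 2 f x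
            + (4/3) * x 1 ^ 2 * pd3 i (pd3 2 f) x)
        - (pd3 i (psi1 φ) x * pd3 0 f x + psi1 φ x * pd3 i (pd3 0 f) x) := by
  have h : calL2 φ f = fun y =>
      (fun z => (fun w => 6 * w 2 * pd3 1 f w) z - (fun w => (4/3) * w 1 ^ 2 * pd3 2 f w) z) y
        - (fun z => psi1 φ z * pd3 0 f z) y := by
    funext y; simp [calL2, L2op]
  have h1 : ContDiff ℝ (⊤ : ℕ∞) (fun w : Fin 3 → ℝ => 6 * w 2 * pd3 1 f w) :=
    (contDiff_const.mul (contDiff_proj 2)).mul (contDiff_pd3 hf 1)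
  have h2 : ContDiff ℝ (⊤ : ℕ∞) (fun w : Fin 3 → ℝ => (4/3) * w 1 ^ 2 * pd3 2 f w) :=
    (contDiff_const.mul ((contDiff_proj 1).pow 2)).mul (contDiff_pd3 hf 2)
  have h3 : ContDiff ℝ (⊤ : ℕ∞) (fun z : Fin 3 → ℝ => psi1 φ z * pd3 0 f z) :=
    (contDiff_psi1 hφ hne).mul (contDiff_pd3 hf 0)
  rw [h, pd3_sub ((h1.sub h2).differentiable (by simp) x) (h3.differentiable (by simp) x),
    pd3_sub (h1.differentiable (by simp) x) (h2.differentiable (by simp) x),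
    pd3_coordmul (contDiff_pd3 hf 1) 6 i 2, pd3_sqmul (contDiff_pd3 hf 2) (4/3) i 1,
    pd3_mul ((contDiff_psi1 hφ hne).differentiable (by simp) x)
      ((contDiff_pd3 hf 0).differentiable (by simp) x)]

/-- genus-1 derivation-algebra relations
`[𝓛₀, ∂₁] = ∂₁`, `[𝓛₀, 𝓛₂] = 2𝓛₂`, `[∂₁, 𝓛₂] = −ψ₁₁∂₁`, where `ψ₁₁ = ∂₁ψ₁`,
for smooth nonvanishing `φ` satisfying `𝓛₀ψ₁ = z₁∂₁ψ₁ + ψ₁`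
(i.e. `L₀ψ₁ − z₁∂₁ψ₁ = ψ₁`, which holds when `φ` solves the heat equations). -/
theorem genus1_calL_relations (φ : (Fin 3 → ℝ) → ℝ) (hφ : ContDiff ℝ (⊤ : ℕ∞) φ)
    (hne : ∀ x, φ x ≠ 0)
    (hheat : ∀ x, L0op (psi1 φ) x - x 0 * pd3 0 (psi1 φ) x = psi1 φ x) :
    (∀ f : (Fin 3 → ℝ) → ℝ, ContDiff ℝ (⊤ : ℕ∞) f → ∀ x,
        calL0 (pd3 0 f) x - pd3 0 (calL0 f) x = pd3 0 f x) ∧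
    (∀ f : (Fin 3 → ℝ) → ℝ, ContDiff ℝ (⊤ : ℕ∞) f → ∀ x,
        calL0 (calL2 φ f) x - calL2 φ (calL0 f) x = 2 * calL2 φ f x) ∧
    (∀ f : (Fin 3 → ℝ) → ℝ, ContDiff ℝ (⊤ : ℕ∞) f → ∀ x,
        pd3 0 (calL2 φ f) x - calL2 φ (pd3 0 f) x
          = -(pd3 0 (psi1 φ) x) * pd3 0 f x) := by
  refine ⟨?_, ?_, ?_⟩
  · intro f hf x
    have h := pd3_calL0 hf 0 x
    simp only [show ((1:Fin 3) = 0) = False by simp, show ((2:Fin 3) = 0) = False by simp,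
      if_false, if_true, eq_self_iff_true] at h
    simp only [calL0, L0op]
    rw [h, pd3_symm hf 0 1 x, pd3_symm hf 0 2 x]
    ring
  · intro f hf x
    have hL2 : ContDiff ℝ (⊤ : ℕ∞) (calL2 φ f) := contDiff_calL2 hφ hne hf
    have hL0 : ContDiff ℝ (⊤ : ℕ∞) (calL0 f) := contDiff_calL0 hf
    have hh := hheat x
    simp only [L0op] at hh
    simp only [calL0, L0op, calL2, L2op]
    rw [pd3_calL2 hφ hne hf 1 x, pd3_calL2 hφ hne hf 2 x, pd3_calL2 hφ hne hf 0 x,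
      pd3_calL0 hf 1 x, pd3_calL0 hf 2 x, pd3_calL0 hf 0 x]
    simp only [Fin.isValue, show ((1:Fin 3) = 0) = False by simp,
      show ((2:Fin 3) = 0) = False by simp, show ((0:Fin 3) = 1) = False by simp,
      show ((2:Fin 3) = 1) = False by simp, show ((0:Fin 3) = 2) = False by simp,
      show ((1:Fin 3) = 2) = False by simp, if_false, if_true, eq_self_iff_true]
    rw [pd3_symm hf 1 0 x, pd3_symm hf 2 0 x, pd3_symm hf 2 1 x]
    linear_combination (-(pd3 0 f x)) * hh
  · intro f hf x
    simp only [calL2, L2op]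
    rw [pd3_calL2 hφ hne hf 0 x]
    simp only [show ((1:Fin 3) = 0) = False by simp, show ((2:Fin 3) = 0) = False by simp,
      if_false]
    rw [pd3_symm hf 0 1 x, pd3_symm hf 0 2 x]
    ring
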